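/- Let u : ℝ × S¹ → M and define v by u(s,t) = φ_L^t(v(s,t)), i.e. u = φ_L^t ∘ v pointwise in t, for a loop of Hamiltonian diffeomorphisms φ_L^t. If H = L ♯ K, then u solves the Floer equation for (H, J₁) if and only if v solves the Floer equation for (K, J₀) where J₀ = (φ_L^t)_*⁻¹ J₁ (φ_L^t)_*. In particular the pointwise identity ∂_s u + J₁(u)(∂_t u − X_H(u)) = (φ_L^t)_*(∂_s v) + J₁(u)((φ_L^t)_*(∂_t v) − (φ_L^t)_* X_K(v)) holds. -/

import Mathlib

/-- For `u(s,t) = φ_L^t(v(s,t))` with `H = L ♯ K`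
(`X_{H_t} = X_{L_t} + (φ_L^t)_* X_{K_t}`), the pointwise identity
`∂_s u + J₁(u)(∂_t u − X_H(u)) = (φ_L^t)_*(∂_s v) + J₁(u)((φ_L^t)_*(∂_t v) − (φ_L^t)_* X_K(v))`
holds, and `u` solves the Floer equation for `(H, J₁)` iff `v` solves it for
`(K, J₀)` with `J₀ = (dφ_L^t)⁻¹ ∘ J₁ ∘ dφ_L^t`. -/
theorem floer_conjugation
    {E : Type*} [NormedAddCommGroup E] [NormedSpace ℝ E]
    (L K H : ℝ → E → ℝ) (XL XK XH : ℝ → E → E)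
    (φ ψ : ℝ → E → E)
    (hφ : ContDiff ℝ (⊤ : ℕ∞) (fun p : ℝ × E => φ p.1 p.2))
    (hinv : ∀ t y, ψ t (φ t y) = y ∧ φ t (ψ t y) = y)
    (hφ1 : ∀ y, φ 1 y = y)
    (hflow : ∀ (p : E) (t : ℝ), HasDerivAt (fun s => φ s p) (XL t (φ t p)) t)
    (hHdef : ∀ t y, H t y = L t y + K t (ψ t y))
    (hXH : ∀ t y, XH t y = XL t y + fderiv ℝ (φ t) (ψ t y) (XK t (ψ t y)))
    (J₁ : ℝ → E → E →L[ℝ] E)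
    (Dφinv : ℝ → E → E →L[ℝ] E)
    (hDφinv : ∀ t p v, Dφinv t p (fderiv ℝ (φ t) p v) = v ∧
      fderiv ℝ (φ t) p (Dφinv t p v) = v)
    (v : ℝ → ℝ → E) (hv : ContDiff ℝ 1 (Function.uncurry v))
    (u : ℝ → ℝ → E) (hu : ∀ s t, u s t = φ t (v s t)) :
    (∀ s t,
      deriv (fun σ => u σ t) s
        + J₁ t (u s t) (deriv (fun τ => u s τ) t - XH t (u s t))
        = fderiv ℝ (φ t) (v s t) (deriv (fun σ => v σ t) s)
          + J₁ t (u s t) (fderiv ℝ (φ t) (v s t) (deriv (fun τ => v s τ) t)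
              - fderiv ℝ (φ t) (v s t) (XK t (v s t)))) ∧
    ((∀ s t, deriv (fun σ => u σ t) s
        + J₁ t (u s t) (deriv (fun τ => u s τ) t - XH t (u s t)) = 0) ↔
     (∀ s t, deriv (fun σ => v σ t) s
        + Dφinv t (v s t) (J₁ t (u s t) (fderiv ℝ (φ t) (v s t)
            (deriv (fun τ => v s τ) t - XK t (v s t)))) = 0)) := by
  have hφd : Differentiable ℝ (fun p : ℝ × E => φ p.1 p.2) := hφ.differentiable (by simp)
  have hvd : Differentiable ℝ (Function.uncurry v) := hv.differentiable one_ne_zero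
  -- derivatives of v
  have hvs : ∀ s t, HasDerivAt (fun σ => v σ t) (deriv (fun σ => v σ t) s) s := by
    intro s t
    have : DifferentiableAt ℝ (fun σ => v σ t) s :=
      by have := DifferentiableAt.comp s (hvd (s, t)) (((differentiableAt_id : DifferentiableAt ℝ id s).prodMk (differentiableAt_const t))); exact this
    exact this.hasDerivAt
  have hvt : ∀ s t, HasDerivAt (fun τ => v s τ) (deriv (fun τ => v s τ) t) t := by
    intro s t
    have : DifferentiableAt ℝ (fun τ => v s τ) t :=
      (hvd (s, t)).comp t (((differentiableAt_const s).prodMk differentiableAt_id))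
    exact this.hasDerivAt
  -- fderiv of φ t expressed via the total derivative
  set F := fun p : ℝ × E => φ p.1 p.2 with hF
  have hFa : ∀ q : ℝ × E, HasFDerivAt F (fderiv ℝ F q) q := fun q => (hφd q).hasFDerivAt
  have hφt : ∀ t p, HasFDerivAt (φ t) ((fderiv ℝ F (t, p)).comp
      ((0 : E →L[ℝ] ℝ).prod (ContinuousLinearMap.id ℝ E))) p := by
    intro t p
    have hc : HasFDerivAt (fun y : E => ((t, y) : ℝ × E))
        (((0 : E →L[ℝ] ℝ)).prod (ContinuousLinearMap.id ℝ E)) p :=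
      (hasFDerivAt_const t p).prodMk (hasFDerivAt_id p)
    exact (hFa (t, p)).comp p hc
  have hfd : ∀ t p (w : E), fderiv ℝ (φ t) p w = fderiv ℝ F (t, p) (0, w) := by
    intro t p w
    rw [(hφt t p).fderiv]
    rfl
  -- partial derivative in t direction equals XL
  have hpart : ∀ t p, fderiv ℝ F (t, p) (1, 0) = XL t (φ t p) := by
    intro t p
    have hc : HasDerivAt (fun τ : ℝ => ((τ, p) : ℝ × E))
        ((1 : ℝ), (0 : E)) t := HasDerivAt.prodMk (hasDerivAt_id t) (hasDerivAt_const t p)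
    have h1 : HasDerivAt (fun τ => φ τ p) (fderiv ℝ F (t, p) (1, 0)) t :=
      by have := HasFDerivAt.comp_hasDerivAt t (hFa (t, p)) hc; exact this
    exact h1.unique (hflow p t)
  -- s-derivative of u
  have hus : ∀ s t, deriv (fun σ => u σ t) s
      = fderiv ℝ (φ t) (v s t) (deriv (fun σ => v σ t) s) := by
    intro s t
    have h2 : (fun σ => u σ t) = fun σ => φ t (v σ t) := by
      funext σ; exact hu σ t
    have h3 : HasDerivAt (fun σ => φ t (v σ t))
        (((fderiv ℝ F (t, v s t)).comp
          ((0 : E →L[ℝ] ℝ).prod (ContinuousLinearMap.id ℝ E)))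
          (deriv (fun σ => v σ t) s)) s :=
      (hφt t (v s t)).comp_hasDerivAt s (hvs s t)
    rw [h2, h3.deriv, ← (hφt t (v s t)).fderiv]
  -- t-derivative of u
  have hut : ∀ s t, deriv (fun τ => u s τ) t
      = XL t (u s t) + fderiv ℝ (φ t) (v s t) (deriv (fun τ => v s τ) t) := by
    intro s t
    have hc : HasDerivAt (fun τ : ℝ => ((τ, v s τ) : ℝ × E))
        ((1 : ℝ), deriv (fun τ => v s τ) t) t := HasDerivAt.prodMk (hasDerivAt_id t) (hvt s t)
    have h1 : HasDerivAt (fun τ => F (τ, v s τ))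
        (fderiv ℝ F (t, v s t) (1, deriv (fun τ => v s τ) t)) t :=
      by have := HasFDerivAt.comp_hasDerivAt t (hFa (t, v s t)) hc; exact this
    have h2 : (fun τ => u s τ) = fun τ => F (τ, v s τ) := by
      funext τ; exact hu s τ
    rw [h2, h1.deriv]
    have h3 : ((1 : ℝ), deriv (fun τ => v s τ) t)
        = ((1 : ℝ), (0 : E)) + ((0 : ℝ), deriv (fun τ => v s τ) t) := by simp
    rw [h3, map_add, hpart t (v s t), ← hfd, ← hu s t]
  -- ψ t (u s t) = v s t
  have hψu : ∀ s t, ψ t (u s t) = v s t := by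
    intro s t; rw [hu s t]; exact (hinv t (v s t)).1
  -- the key pointwise identity
  have key : ∀ s t,
      deriv (fun σ => u σ t) s
        + J₁ t (u s t) (deriv (fun τ => u s τ) t - XH t (u s t))
        = fderiv ℝ (φ t) (v s t) (deriv (fun σ => v σ t) s)
          + J₁ t (u s t) (fderiv ℝ (φ t) (v s t) (deriv (fun τ => v s τ) t)
              - fderiv ℝ (φ t) (v s t) (XK t (v s t))) := by
    intro s t
    rw [hus s t, hut s t, hXH t (u s t), hψu s t]

    abel_nf
  refine ⟨key, ?_⟩
  have hDinj : ∀ t p (w : E), fderiv ℝ (φ t) p w = 0 → w = 0 := by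
    intro t p w hw
    have := (hDφinv t p w).1
    rw [hw, map_zero] at this
    exact this.symm
  constructor
  · intro h s t
    have h0 := h s t
    rw [key s t, ← map_sub] at h0
    have h1 : fderiv ℝ (φ t) (v s t)
        (deriv (fun σ => v σ t) s + Dφinv t (v s t) (J₁ t (u s t)
          (fderiv ℝ (φ t) (v s t) (deriv (fun τ => v s τ) t - XK t (v s t))))) = 0 := by
      rw [map_add, (hDφinv t (v s t) _).2]
      exact h0
    exact hDinj t (v s t) _ h1
  · intro h s t
    have h0 := h s t
    rw [key s t, ← map_sub]
    calc fderiv ℝ (φ t) (v s t) (deriv (fun σ => v σ t) s)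
        + J₁ t (u s t) (fderiv ℝ (φ t) (v s t) (deriv (fun τ => v s τ) t - XK t (v s t)))
        = fderiv ℝ (φ t) (v s t)
          (deriv (fun σ => v σ t) s + Dφinv t (v s t) (J₁ t (u s t)
            (fderiv ℝ (φ t) (v s t) (deriv (fun τ => v s τ) t - XK t (v s t))))) := by
          rw [map_add, (hDφinv t (v s t) _).2]
      _ = 0 := by rw [h0, map_zero]
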